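/- arXiv:1904.00203 — 5 statements merged into one kernel-verified Lean document; each statement's English description precedes it below -/
import Mathlib

section
/- Let A = [[P, Q], [O, S]] be a block upper-triangular matrix in Sp(2g, ℤ). Then the bilinear form on U = ker(S - I_g) ⊆ ℚ^g defined by ⟨x, y⟩ = ᵗx·ᵗQ·y is symmetric. -/
open Matrix

def symplJ (g : ℕ) : Matrix (Fin g ⊕ Fin g) (Fin g ⊕ Fin g) ℤ :=
  fromBlocks 0 1 (-1) 0

def IsSymplectic {g : ℕ} (A : Matrix (Fin g ⊕ Fin g) (Fin g ⊕ Fin g) ℤ) : Prop :=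
  Aᵀ * symplJ g * A = symplJ g

theorem Matrix.IsSymm.dotProduct_mulVec_comm {R n : Type*} [CommSemiring R] [Fintype n]
    {M : Matrix n n R} (hM : M.IsSymm) (x y : n → R) : x ⬝ᵥ M *ᵥ y = y ⬝ᵥ M *ᵥ x := by
  rw [← hM.eq, dotProduct_transpose_mulVec, hM.eq]

/-- On fixed vectors of `S`, `Qᵀ` acts as the symmetric matrix `Qᵀ * S`. -/
theorem dotProduct_transpose_mulVec_comm_of_mulVec_eq_self {R n : Type*} [CommSemiring R]
    [Fintype n] {Q S : Matrix n n R} (hQS : (Qᵀ * S).IsSymm) {x y : n → R}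
    (hx : S *ᵥ x = x) (hy : S *ᵥ y = y) : x ⬝ᵥ Qᵀ *ᵥ y = y ⬝ᵥ Qᵀ *ᵥ x := by
  calc x ⬝ᵥ Qᵀ *ᵥ y = x ⬝ᵥ (Qᵀ * S) *ᵥ y := by rw [← mulVec_mulVec, hy]
    _ = y ⬝ᵥ (Qᵀ * S) *ᵥ x := hQS.dotProduct_mulVec_comm x y
    _ = y ⬝ᵥ Qᵀ *ᵥ x := by rw [← mulVec_mulVec, hx]

/-- The lower right block of `Aᵀ J A = J` for `A = [[P, Q], [0, S]]` reads `Qᵀ S - Sᵀ Q = 0`. -/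
theorem IsSymplectic.isSymm_transpose_mul_of_fromBlocks {g : ℕ}
    {P Q S : Matrix (Fin g) (Fin g) ℤ} (hA : IsSymplectic (fromBlocks P Q 0 S)) :
    (Qᵀ * S).IsSymm := by
  unfold IsSymplectic symplJ at hA
  rw [fromBlocks_transpose, fromBlocks_multiply, fromBlocks_multiply] at hA
  have h22 := congrArg toBlocks₂₂ hA
  simp only [toBlocks_fromBlocks₂₂, mul_zero, mul_one, mul_neg, zero_add, add_zero, neg_mul] at h22
  simp only [IsSymm, transpose_mul, transpose_transpose]
  exact neg_add_eq_zero.mp h22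

/-- The bilinear form `⟨x, y⟩ = ᵗx·ᵗQ·y` is symmetric on `ker(S - I) ⊆ ℚ^g`. -/
theorem form_symm_on_ker (g : ℕ) (P Q S : Matrix (Fin g) (Fin g) ℤ)
    (hA : IsSymplectic (fromBlocks P Q 0 S))
    (x y : Fin g → ℚ)
    (hx : (S.map ((↑) : ℤ → ℚ)) *ᵥ x = x)
    (hy : (S.map ((↑) : ℤ → ℚ)) *ᵥ y = y) :
    x ⬝ᵥ (Q.map ((↑) : ℤ → ℚ))ᵀ *ᵥ y = y ⬝ᵥ (Q.map ((↑) : ℤ → ℚ))ᵀ *ᵥ x := by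
  have hQS : ((Q.map (Int.castRingHom ℚ))ᵀ * S.map (Int.castRingHom ℚ)).IsSymm := by
    rw [← transpose_map, ← Matrix.map_mul]
    exact hA.isSymm_transpose_mul_of_fromBlocks.map _
  exact dotProduct_transpose_mulVec_comm_of_mulVec_eq_self hQS hx hy
end

section
/- For A, B ∈ Sp(2g, ℤ), the bilinear form ⟨(x,y), (x',y')⟩ := ᵗ(x+y)·J·(I - B)·y' on the real vector space V_{A,B} = {(x,y) ∈ ℝ^{2g} ⊕ ℝ^{2g} : (A⁻¹ - I)x + (B - I)y = 0} is symmetric. -/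
/-!
Write `ω(a, b) = a ⬝ᵥ J *ᵥ b` and `u = (1 - B) y`. The defining equation of `V_{A,B}` says
`A⁻¹ x = x + u` and `B y = y - u`. Since `A⁻¹` and `B` preserve `ω`, expanding
`ω(A⁻¹ x, A⁻¹ x') = ω(x, x')` and `ω(B y, B y') = ω(y, y')` gives two relations whose
difference, together with the skew-symmetry of `ω`, is `ω(x + y, u') = ω(x' + y', u)`.
-/

open Matrix

namespace Matrix

variable {n R : Type*} [Fintype n] [CommRing R]

theorem dotProduct_mulVec_comm_of_transpose_eq_neg {J : Matrix n n R} (hJ : Jᵀ = -J)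
    (a b : n → R) : a ⬝ᵥ J *ᵥ b = -(b ⬝ᵥ J *ᵥ a) := by
  rw [dotProduct_mulVec, ← mulVec_transpose, hJ, neg_mulVec, neg_dotProduct, dotProduct_comm]

theorem dotProduct_mulVec_mulVec_of_transpose_mul_mul {M J : Matrix n n R}
    (h : Mᵀ * J * M = J) (a b : n → R) : (M *ᵥ a) ⬝ᵥ J *ᵥ (M *ᵥ b) = a ⬝ᵥ J *ᵥ b := by
  rw [mulVec_mulVec, dotProduct_mulVec, ← vecMul_transpose, vecMul_vecMul, ← Matrix.mul_assoc, h,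
    ← dotProduct_mulVec]

variable [DecidableEq n]

theorem isUnit_det_of_transpose_mul_mul {M J : Matrix n n R} (hJ : IsUnit J.det)
    (h : Mᵀ * J * M = J) : IsUnit M.det := by
  have hdet : M.det * M.det * J.det = 1 * J.det := by
    have := congrArg det h
    rw [det_mul, det_mul, det_transpose] at this
    linear_combination this
  exact IsUnit.of_mul_eq_one _ (hJ.mul_right_cancel hdet)

theorem transpose_nonsing_inv_mul_mul {M J : Matrix n n R} (hJ : IsUnit J.det)
    (h : Mᵀ * J * M = J) : M⁻¹ᵀ * J * M⁻¹ = J := by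
  have hM := isUnit_det_of_transpose_mul_mul hJ h
  have hMt : IsUnit Mᵀ.det := by rwa [det_transpose]
  calc M⁻¹ᵀ * J * M⁻¹ = Mᵀ⁻¹ * (Mᵀ * J * M) * M⁻¹ := by rw [h, transpose_nonsing_inv]
    _ = (Mᵀ⁻¹ * Mᵀ) * J * (M * M⁻¹) := by simp only [Matrix.mul_assoc]
    _ = J := by rw [nonsing_inv_mul _ hMt, mul_nonsing_inv _ hM, Matrix.one_mul, Matrix.mul_one]

/-- Symmetry of Meyer's form for any two isometries `P = A⁻¹`, `Q = B` of a skew form `J`. -/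
theorem dotProduct_mul_one_sub_mulVec_comm {J P Q : Matrix n n R} (hJ : Jᵀ = -J)
    (hP : Pᵀ * J * P = J) (hQ : Qᵀ * J * Q = J) {x y x' y' : n → R}
    (hxy : (P - 1) *ᵥ x + (Q - 1) *ᵥ y = 0) (hxy' : (P - 1) *ᵥ x' + (Q - 1) *ᵥ y' = 0) :
    (x + y) ⬝ᵥ (J * (1 - Q)) *ᵥ y' = (x' + y') ⬝ᵥ (J * (1 - Q)) *ᵥ y := by
  set u := (1 - Q) *ᵥ y with hu
  set u' := (1 - Q) *ᵥ y' with hu'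
  simp only [sub_mulVec, one_mulVec] at hxy hxy'
  have hPx : P *ᵥ x = x + u := by rw [hu, sub_mulVec, one_mulVec]; linear_combination hxy
  have hPx' : P *ᵥ x' = x' + u' := by rw [hu', sub_mulVec, one_mulVec]; linear_combination hxy'
  have hQy : Q *ᵥ y = y - u := by rw [hu, sub_mulVec, one_mulVec]; abel
  have hQy' : Q *ᵥ y' = y' - u' := by rw [hu', sub_mulVec, one_mulVec]; abel
  have hωP := dotProduct_mulVec_mulVec_of_transpose_mul_mul hP x x'
  have hωQ := dotProduct_mulVec_mulVec_of_transpose_mul_mul hQ y y'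
  rw [hPx, hPx'] at hωP
  rw [hQy, hQy'] at hωQ
  simp only [mulVec_add, mulVec_sub, dotProduct_add, dotProduct_sub, add_dotProduct,
    sub_dotProduct] at hωP hωQ
  rw [← mulVec_mulVec, ← mulVec_mulVec, ← hu, ← hu', add_dotProduct, add_dotProduct]
  linear_combination hωP - hωQ - dotProduct_mulVec_comm_of_transpose_eq_neg hJ x' u
    - dotProduct_mulVec_comm_of_transpose_eq_neg hJ y' u

end Matrix

section

variable {g : ℕ} (R : Type*) [CommRing R]

theorem map_symplJ : (symplJ g).map ((↑) : ℤ → R) = fromBlocks 0 1 (-1) 0 := by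
  simp [symplJ, fromBlocks_map, Matrix.map_neg, Matrix.map_one]

theorem transpose_map_symplJ :
    ((symplJ g).map ((↑) : ℤ → R))ᵀ = -(symplJ g).map ((↑) : ℤ → R) := by
  simp [map_symplJ, fromBlocks_transpose, fromBlocks_neg]

theorem isUnit_det_map_symplJ : IsUnit ((symplJ g).map ((↑) : ℤ → R)).det := by
  refine isUnit_det_of_left_inverse (B := -(symplJ g).map ((↑) : ℤ → R)) ?_
  simp [map_symplJ, fromBlocks_multiply, ← fromBlocks_one, fromBlocks_neg]

theorem IsSymplectic.map {A : Matrix (Fin g ⊕ Fin g) (Fin g ⊕ Fin g) ℤ} (hA : IsSymplectic A) :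
    (A.map ((↑) : ℤ → R))ᵀ * (symplJ g).map ((↑) : ℤ → R) * A.map ((↑) : ℤ → R)
      = (symplJ g).map ((↑) : ℤ → R) := by
  have h := congrArg (·.map (Int.castRingHom R)) hA
  rw [Matrix.map_mul, Matrix.map_mul, transpose_map] at h
  exact h

end

/-- Meyer's bilinear form on `V_{A,B}` is symmetric. -/
theorem meyer_form_symm (g : ℕ)
    (A B : Matrix (Fin g ⊕ Fin g) (Fin g ⊕ Fin g) ℤ)
    (hA : IsSymplectic A) (hB : IsSymplectic B)
    (x y x' y' : Fin g ⊕ Fin g → ℝ)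
    (hxy : ((A.map ((↑) : ℤ → ℝ))⁻¹ - 1) *ᵥ x + (B.map ((↑) : ℤ → ℝ) - 1) *ᵥ y = 0)
    (hxy' : ((A.map ((↑) : ℤ → ℝ))⁻¹ - 1) *ᵥ x' + (B.map ((↑) : ℤ → ℝ) - 1) *ᵥ y' = 0) :
    (x + y) ⬝ᵥ ((symplJ g).map ((↑) : ℤ → ℝ) * (1 - B.map ((↑) : ℤ → ℝ))) *ᵥ y'
      = (x' + y') ⬝ᵥ ((symplJ g).map ((↑) : ℤ → ℝ) * (1 - B.map ((↑) : ℤ → ℝ))) *ᵥ y :=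
  dotProduct_mul_one_sub_mulVec_comm (transpose_map_symplJ ℝ)
    (transpose_nonsing_inv_mul_mul (isUnit_det_map_symplJ ℝ) (hA.map ℝ)) (hB.map ℝ) hxy hxy'
end

section
/- The abelian group generated by three elements r, s, t subject to the relations 2r = 0, 4t + 2g·s = 0, and 2(g+1)·t + g(g+1)·s = 0 is isomorphic to ℤ ⊕ ℤ/2 ⊕ ℤ/2, for every integer g ≥ 2. -/
/-!
In the coordinates `(s, t)` the relation vectors are `2·(g, 2)` and `(g + 1)·(g, 2)`, so they
span the multiples of `2u`, with `u` the primitive vector `(g/2, 1)` for even `g` and `(g, 2)`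
for odd `g`. If `u = (a, b)` and `p a + q b = 1`, the unimodular change of coordinates
`(s, t) ↦ (b s - a t, p s + q t)` sends `u` to `(0, 1)`, whence `ℤ² / 2uℤ ≅ ℤ × ℤ/2`; the
relation `2r` gives the other `ℤ/2`.
-/

/-- The relation submodule of `ℤ³` (coordinates `(r, s, t)`) generated by
`2r`, `4t + 2g·s` and `2(g+1)·t + g(g+1)·s`. -/
def relSub (g : ℕ) : Submodule ℤ (ℤ × ℤ × ℤ) :=
  Submodule.span ℤ
    {((2 : ℤ), (0 : ℤ), (0 : ℤ)), ((0 : ℤ), (2 * g : ℤ), (4 : ℤ)),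
      ((0 : ℤ), (g * (g + 1) : ℤ), (2 * (g + 1) : ℤ))}

open Submodule

def doubledSpan (a b : ℤ) : Submodule ℤ (ℤ × ℤ × ℤ) :=
  span ℤ {((2 : ℤ), (0 : ℤ), (0 : ℤ)), ((0 : ℤ), 2 * a, 2 * b)}

theorem relSub_two_mul (k : ℕ) : relSub (2 * k) = doubledSpan k 1 := by
  apply le_antisymm
  · rw [relSub, span_le]
    rintro x (rfl | rfl | rfl)
    · exact subset_span (by simp)
    · exact mem_span_pair.mpr ⟨0, 2, by ext <;> simp⟩
    · exact mem_span_pair.mpr ⟨0, 2 * k + 1, by ext <;> simp <;> ring⟩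
  · rw [doubledSpan, span_le]
    rintro x (rfl | rfl)
    · exact subset_span (by simp)
    · exact mem_span_triple.mpr ⟨0, -k, 1, by ext <;> simp <;> ring⟩

theorem relSub_two_mul_add_one (k : ℕ) : relSub (2 * k + 1) = doubledSpan (2 * k + 1) 2 := by
  apply le_antisymm
  · rw [relSub, span_le]
    rintro x (rfl | rfl | rfl)
    · exact subset_span (by simp)
    · exact subset_span (by simp)
    · exact mem_span_pair.mpr ⟨0, k + 1, by ext <;> simp <;> ring⟩
  · rw [doubledSpan, span_le]
    rintro x (rfl | rfl)
    · exact subset_span (by simp)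
    · exact subset_span (by simp)

section BezoutMap

variable {a b p q : ℤ}

variable (a b p q) in
def bezoutMap : (ℤ × ℤ × ℤ) →ₗ[ℤ] ℤ × ZMod 2 × ZMod 2 where
  toFun x := (b * x.2.1 - a * x.2.2, (x.1 : ZMod 2), ((p * x.2.1 + q * x.2.2 : ℤ) : ZMod 2))
  map_add' := by
    rintro ⟨r, s, t⟩ ⟨r', s', t'⟩
    ext <;> simp <;> ring
  map_smul' := by
    rintro c ⟨r, s, t⟩
    ext <;> simp <;> ring

theorem bezoutMap_apply (r s t : ℤ) :
    bezoutMap a b p q (r, s, t) = (b * s - a * t, (r : ZMod 2), ((p * s + q * t : ℤ) : ZMod 2)) :=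
  rfl

theorem ker_bezoutMap (h : p * a + q * b = 1) :
    LinearMap.ker (bezoutMap a b p q) = doubledSpan a b := by
  apply le_antisymm
  · rintro ⟨r, s, t⟩ hx
    simp only [LinearMap.mem_ker, bezoutMap_apply, Prod.mk_eq_zero, sub_eq_zero,
      ZMod.intCast_zmod_eq_zero_iff_dvd] at hx
    obtain ⟨hcross, ⟨n, rfl⟩, ⟨m, hm⟩⟩ := hx
    push_cast at hm
    -- `b s = a t` and `p a + q b = 1` force `(s, t) = (p s + q t) • (a, b)`
    have hs : s = m * (2 * a) := by linear_combination q * hcross - s * h + a * hm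
    have ht : t = m * (2 * b) := by linear_combination -p * hcross - t * h + b * hm
    refine mem_span_pair.mpr ⟨n, m, ?_⟩
    ext <;> simp [hs, ht, mul_comm]
  · rw [doubledSpan, span_le]
    rintro x (rfl | rfl) <;>
      simp only [SetLike.mem_coe, LinearMap.mem_ker, bezoutMap_apply, Prod.mk_eq_zero,
        ZMod.intCast_zmod_eq_zero_iff_dvd]
    · exact ⟨by ring, ⟨1, rfl⟩, ⟨0, by ring⟩⟩
    · exact ⟨by ring, ⟨0, rfl⟩, ⟨p * a + q * b, by ring⟩⟩

theorem bezoutMap_surjective (h : p * a + q * b = 1) :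
    Function.Surjective (bezoutMap a b p q) := by
  rintro ⟨x, y, z⟩
  obtain ⟨r, rfl⟩ := ZMod.intCast_surjective y
  obtain ⟨w, rfl⟩ := ZMod.intCast_surjective z
  refine ⟨(r, q * x + a * w, -p * x + b * w), ?_⟩
  rw [bezoutMap_apply]
  congr 2
  · linear_combination x * h
  · congr 1; linear_combination w * h

end BezoutMap

theorem abelianization_iso_general (g : ℕ) :
    Nonempty (((ℤ × ℤ × ℤ) ⧸ relSub g) ≃+ ℤ × ZMod 2 × ZMod 2) := by
  obtain ⟨a, b, p, q, hbezout, hrel⟩ :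
      ∃ a b p q : ℤ, p * a + q * b = 1 ∧ relSub g = doubledSpan a b := by
    obtain ⟨k, rfl | rfl⟩ := Nat.even_or_odd' g
    · exact ⟨k, 1, 0, 1, by ring, relSub_two_mul k⟩
    · exact ⟨2 * k + 1, 2, 1, -k, by ring, relSub_two_mul_add_one k⟩
  rw [hrel, ← ker_bezoutMap hbezout]
  exact ⟨((bezoutMap a b p q).quotKerEquivOfSurjective (bezoutMap_surjective hbezout)).toAddEquiv⟩

/-- The abelianization of the hyperelliptic handlebody group:
`⟨r, s, t | 2r, 4t + 2g·s, 2(g+1)t + g(g+1)s⟩ ≅ ℤ ⊕ ℤ/2 ⊕ ℤ/2` for `g ≥ 2`. -/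
theorem abelianization_iso (g : ℕ) (hg : 2 ≤ g) :
    Nonempty (((ℤ × ℤ × ℤ) ⧸ relSub g) ≃+ ℤ × ZMod 2 × ZMod 2) :=
  abelianization_iso_general g
end

section
/- For even g ≥ 2, in the abelian group G = ⟨r, s, t | 2r = 0, 4t + 2g·s = 0, 2(g+1)t + g(g+1)s = 0⟩, the elements s, t + (g/2)·s, and r give a decomposition G ≅ ℤ·s ⊕ (ℤ/2)·(t + (g/2)s) ⊕ (ℤ/2)·r. -/
def relSubCoords (k : ℕ) : (ℤ × ℤ × ℤ) →ₗ[ℤ] ℤ × ZMod 2 × ZMod 2 where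
  toFun p := (p.2.1 - k * p.2.2, (p.2.2 : ZMod 2), (p.1 : ZMod 2))
  map_add' := by
    rintro ⟨x, y, z⟩ ⟨x', y', z'⟩
    simp only [Prod.mk_add_mk, Int.cast_add, Prod.mk.injEq, and_true]
    ring
  map_smul' := by
    rintro n ⟨x, y, z⟩
    simp only [Prod.smul_mk, smul_eq_mul, Int.cast_mul, zsmul_eq_mul, RingHom.id_apply,
      Prod.mk.injEq, and_true]
    ring

@[simp]
theorem relSubCoords_apply (k : ℕ) (x y z : ℤ) :
    relSubCoords k (x, y, z) = (y - k * z, (z : ZMod 2), (x : ZMod 2)) :=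
  rfl

theorem relSubCoords_surjective (k : ℕ) : Function.Surjective (relSubCoords k) := by
  rintro ⟨n, a, b⟩
  refine ⟨((b.val : ℤ), n + k * a.val, (a.val : ℤ)), ?_⟩
  simp

theorem mem_relSub_of_eq_two_mul {g k : ℕ} (hk : g = 2 * k) :
    ((0 : ℤ), (2 * k : ℤ), (2 : ℤ)) ∈ relSub g := by
  have hv : ((0 : ℤ), (2 * g : ℤ), (4 : ℤ)) ∈ relSub g := Submodule.subset_span (by simp)
  have hw : ((0 : ℤ), (g * (g + 1) : ℤ), (2 * (g + 1) : ℤ)) ∈ relSub g :=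
    Submodule.subset_span (by simp)
  have hcomb : ((0 : ℤ), (2 * k : ℤ), (2 : ℤ)) =
      (-(k : ℤ)) • ((0 : ℤ), (2 * g : ℤ), (4 : ℤ)) +
        ((0 : ℤ), (g * (g + 1) : ℤ), (2 * (g + 1) : ℤ)) := by
    subst hk
    simp only [Prod.smul_mk, smul_eq_mul, Prod.mk_add_mk, Prod.mk.injEq]
    push_cast
    exact ⟨by ring, by ring, by ring⟩
  rw [hcomb]
  exact add_mem (Submodule.smul_mem _ _ hv) hw

theorem ker_relSubCoords {g k : ℕ} (hk : g = 2 * k) :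
    LinearMap.ker (relSubCoords k) = relSub g := by
  apply le_antisymm
  · rintro ⟨x, y, z⟩ hp
    simp only [LinearMap.mem_ker, relSubCoords_apply, Prod.mk_eq_zero, sub_eq_zero,
      ZMod.intCast_zmod_eq_zero_iff_dvd, Nat.cast_ofNat] at hp
    obtain ⟨rfl, ⟨z, rfl⟩, ⟨x, rfl⟩⟩ := hp
    have hdecomp : ((2 * x : ℤ), (k * (2 * z) : ℤ), (2 * z : ℤ)) =
        x • ((2 : ℤ), (0 : ℤ), (0 : ℤ)) + z • ((0 : ℤ), (2 * k : ℤ), (2 : ℤ)) := by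
      simp only [Prod.smul_mk, smul_eq_mul, Prod.mk_add_mk, Prod.mk.injEq]
      exact ⟨by ring, by ring, by ring⟩
    rw [hdecomp]
    exact add_mem (Submodule.smul_mem _ _ (Submodule.subset_span (by simp)))
      (Submodule.smul_mem _ _ (mem_relSub_of_eq_two_mul hk))
  · rw [relSub, Submodule.span_le]
    subst hk
    rintro _ (rfl | rfl | rfl) <;>
      simp only [SetLike.mem_coe, LinearMap.mem_ker, relSubCoords_apply, Prod.mk_eq_zero,
        ZMod.intCast_zmod_eq_zero_iff_dvd] <;> push_cast <;>
      exact ⟨by ring, by norm_num, by norm_num⟩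

theorem abelianization_iso_even_general (g k : ℕ) (hk : g = 2 * k) :
    ∃ f : ℤ × ZMod 2 × ZMod 2 ≃+ ((ℤ × ℤ × ℤ) ⧸ relSub g),
      f (1, 0, 0) = Submodule.Quotient.mk ((0 : ℤ), (1 : ℤ), (0 : ℤ)) ∧
      f (0, 1, 0) = Submodule.Quotient.mk ((0 : ℤ), (k : ℤ), (1 : ℤ)) ∧
      f (0, 0, 1) = Submodule.Quotient.mk ((1 : ℤ), (0 : ℤ), (0 : ℤ)) := by
  let e : ((ℤ × ℤ × ℤ) ⧸ relSub g) ≃ₗ[ℤ] ℤ × ZMod 2 × ZMod 2 :=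
    (Submodule.quotEquivOfEq _ _ (ker_relSubCoords hk).symm).trans
      ((relSubCoords k).quotKerEquivOfSurjective (relSubCoords_surjective k))
  have he (v : ℤ × ℤ × ℤ) : e (Submodule.Quotient.mk v) = relSubCoords k v := rfl
  refine ⟨e.symm.toAddEquiv, ?_, ?_, ?_⟩ <;>
    refine e.symm_apply_eq.2 ?_ <;> rw [he, relSubCoords_apply] <;> simp

/-- For even `g = 2k ≥ 2`, the classes of `s`, `t + (g/2)·s` and `r` give an
explicit decomposition `G ≅ ℤ ⊕ ℤ/2 ⊕ ℤ/2`. -/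
theorem abelianization_iso_even (g k : ℕ) (hg : 2 ≤ g) (hk : g = 2 * k) :
    ∃ f : ℤ × ZMod 2 × ZMod 2 ≃+ ((ℤ × ℤ × ℤ) ⧸ relSub g),
      f (1, 0, 0) = Submodule.Quotient.mk ((0 : ℤ), (1 : ℤ), (0 : ℤ)) ∧
      f (0, 1, 0) = Submodule.Quotient.mk ((0 : ℤ), (k : ℤ), (1 : ℤ)) ∧
      f (0, 0, 1) = Submodule.Quotient.mk ((1 : ℤ), (0 : ℤ), (0 : ℤ)) :=
  abelianization_iso_even_general g k hk
end

section
/- For odd g ≥ 3, in the abelian group G = ⟨r, s, t | 2r = 0, 4t + 2g·s = 0, 2(g+1)t + g(g+1)s = 0⟩, the elements t + ((g+1)/2)·s, 2t + g·s, and r give a decomposition G ≅ ℤ·(t + ((g+1)/2)s) ⊕ (ℤ/2)·(2t + g·s) ⊕ (ℤ/2)·r. -/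
def oddInvariants (k : ℕ) : ℤ × ℤ × ℤ →ₗ[ℤ] ℤ × ZMod 2 × ZMod 2 where
  toFun p := (2 * p.2.1 - (2 * k + 1) * p.2.2, ((p.2.1 + (k + 1) * p.2.2 : ℤ) : ZMod 2),
    ((p.1 : ℤ) : ZMod 2))
  map_add' x y := by ext <;> simp <;> ring
  map_smul' c x := by ext <;> simp <;> ring

section

variable (k : ℕ)

@[simp]
theorem oddInvariants_apply (r s t : ℤ) :
    oddInvariants k (r, s, t) =
      (2 * s - (2 * k + 1) * t, ((s + (k + 1) * t : ℤ) : ZMod 2), ((r : ℤ) : ZMod 2)) :=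
  rfl

theorem oddInvariants_zero_succ_one : oddInvariants k (0, (k : ℤ) + 1, 1) = (1, 0, 0) := by
  simp only [oddInvariants_apply, Prod.mk.injEq]
  push_cast
  grind

theorem oddInvariants_zero_odd_two :
    oddInvariants k (0, ((2 * k + 1 : ℕ) : ℤ), 2) = (0, 1, 0) := by
  simp only [oddInvariants_apply, Prod.mk.injEq]
  push_cast
  grind

theorem oddInvariants_one_zero_zero : oddInvariants k (1, 0, 0) = (0, 0, 1) := by
  simp

theorem oddInvariants_surjective : Function.Surjective (oddInvariants k) := by
  rintro ⟨a, b, c⟩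
  obtain ⟨m, rfl⟩ := ZMod.intCast_surjective b
  obtain ⟨n, rfl⟩ := ZMod.intCast_surjective c
  refine ⟨a • ((0 : ℤ), (k : ℤ) + 1, (1 : ℤ)) +
    m • ((0 : ℤ), ((2 * k + 1 : ℕ) : ℤ), (2 : ℤ)) + n • ((1 : ℤ), (0 : ℤ), (0 : ℤ)), ?_⟩
  simp only [map_add, map_smul, oddInvariants_zero_succ_one, oddInvariants_zero_odd_two,
    oddInvariants_one_zero_zero]
  ext <;> simp

theorem relSub_le_ker_oddInvariants : relSub (2 * k + 1) ≤ LinearMap.ker (oddInvariants k) := by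
  rw [relSub, Submodule.span_le]
  simp only [Set.insert_subset_iff, Set.singleton_subset_iff, SetLike.mem_coe, LinearMap.mem_ker,
    oddInvariants_apply, Prod.mk_eq_zero]
  push_cast
  grind

theorem ker_oddInvariants_le_relSub : LinearMap.ker (oddInvariants k) ≤ relSub (2 * k + 1) := by
  rintro ⟨r, s, t⟩ h
  simp only [LinearMap.mem_ker, oddInvariants_apply, Prod.mk_eq_zero,
    ZMod.intCast_zmod_eq_zero_iff_dvd, Nat.cast_ofNat] at h
  obtain ⟨h1, ⟨c, hc⟩, ⟨a, rfl⟩⟩ := h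
  -- `2s = g·t` with `g` odd gives `t = 2(s - k·t)`; the parity condition makes `s - k·t` even.
  set m := c - (2 * k + 1) * (s - k * t)
  have ht : t = 4 * m := by linear_combination (4 * k + 1) * h1 + 2 * hc
  have hs : s = 2 * (2 * k + 1) * m := by
    linear_combination (4 * k ^ 2 + 3 * k + 1) * h1 + (2 * k + 1) * hc
  have hcomb : ((2 : ℤ) * a, s, t) = a • ((2 : ℤ), (0 : ℤ), (0 : ℤ)) +
      m • ((0 : ℤ), 2 * ((2 * k + 1 : ℕ) : ℤ), (4 : ℤ)) := by
    simp only [Prod.smul_mk, Prod.mk_add_mk, smul_eq_mul, Prod.mk.injEq]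
    push_cast
    grind
  rw [hcomb]
  exact add_mem (Submodule.smul_mem _ _ (Submodule.subset_span (by simp)))
    (Submodule.smul_mem _ _ (Submodule.subset_span (by simp)))

theorem ker_oddInvariants : LinearMap.ker (oddInvariants k) = relSub (2 * k + 1) :=
  (ker_oddInvariants_le_relSub k).antisymm (relSub_le_ker_oddInvariants k)

noncomputable def relSubQuotEquiv :
    (ℤ × ZMod 2 × ZMod 2) ≃ₗ[ℤ] (ℤ × ℤ × ℤ) ⧸ relSub (2 * k + 1) :=
  ((oddInvariants k).quotKerEquivOfSurjective (oddInvariants_surjective k)).symm.trans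
    (Submodule.quotEquivOfEq _ _ (ker_oddInvariants k))

theorem relSubQuotEquiv_oddInvariants (v : ℤ × ℤ × ℤ) :
    relSubQuotEquiv k (oddInvariants k v) = Submodule.Quotient.mk v :=
  congrArg _ (LinearMap.quotKerEquivOfSurjective_symm_apply _ _ _)

end

theorem abelianization_iso_odd_general (g k : ℕ) (hk : g = 2 * k + 1) :
    ∃ f : ℤ × ZMod 2 × ZMod 2 ≃+ ((ℤ × ℤ × ℤ) ⧸ relSub g),
      f (1, 0, 0) = Submodule.Quotient.mk ((0 : ℤ), ((k : ℤ) + 1), (1 : ℤ)) ∧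
      f (0, 1, 0) = Submodule.Quotient.mk ((0 : ℤ), (g : ℤ), (2 : ℤ)) ∧
      f (0, 0, 1) = Submodule.Quotient.mk ((1 : ℤ), (0 : ℤ), (0 : ℤ)) := by
  subst hk
  refine ⟨(relSubQuotEquiv k).toAddEquiv, ?_, ?_, ?_⟩
  · rw [← oddInvariants_zero_succ_one k]
    exact relSubQuotEquiv_oddInvariants k _
  · rw [← oddInvariants_zero_odd_two k]
    exact relSubQuotEquiv_oddInvariants k _
  · rw [← oddInvariants_one_zero_zero k]
    exact relSubQuotEquiv_oddInvariants k _

/-- For odd `g = 2k + 1 ≥ 3`, the classes of `t + ((g+1)/2)·s`, `2t + g·s` and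
`r` give an explicit decomposition `G ≅ ℤ ⊕ ℤ/2 ⊕ ℤ/2`. -/
theorem abelianization_iso_odd (g k : ℕ) (hg : 3 ≤ g) (hk : g = 2 * k + 1) :
    ∃ f : ℤ × ZMod 2 × ZMod 2 ≃+ ((ℤ × ℤ × ℤ) ⧸ relSub g),
      f (1, 0, 0) = Submodule.Quotient.mk ((0 : ℤ), ((k : ℤ) + 1), (1 : ℤ)) ∧
      f (0, 1, 0) = Submodule.Quotient.mk ((0 : ℤ), (g : ℤ), (2 : ℤ)) ∧
      f (0, 0, 1) = Submodule.Quotient.mk ((1 : ℤ), (0 : ℤ), (0 : ℤ)) :=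
  abelianization_iso_odd_general g k hk
end
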